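/- arXiv:1005.0988 — 3 statements merged into one kernel-verified Lean document; each statement's English description precedes it below -/
import Mathlib

section
/- For any graphs G and H, 2γ(G □ H) ≥ γ(G)·γ(H). -/
open Finset

/-- A `k`-rainbow dominating function: every vertex assigned `∅` sees all `k` colors
among its neighbors. -/
def SimpleGraph.IsRainbowDF {V : Type*} {k : ℕ} (G : SimpleGraph V)
    (f : V → Finset (Fin k)) : Prop :=
  ∀ v, f v = ∅ → ∀ c : Fin k, ∃ u, G.Adj v u ∧ c ∈ f u

/-- The `k`-rainbow domination number. -/
noncomputable def SimpleGraph.rainbowNum {V : Type*} [Fintype V] (G : SimpleGraph V)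
    (k : ℕ) : ℕ :=
  sInf {w | ∃ f : V → Finset (Fin k), G.IsRainbowDF f ∧ w = ∑ v, (f v).card}

/-- `S` is a dominating set of `G`. -/
def SimpleGraph.IsDomSet {V : Type*} (G : SimpleGraph V) (S : Set V) : Prop :=
  ∀ v, v ∉ S → ∃ u ∈ S, G.Adj v u

/-- The domination number. -/
noncomputable def SimpleGraph.domNum {V : Type*} [Fintype V] (G : SimpleGraph V) : ℕ :=
  sInf {n | ∃ S : Finset V, G.IsDomSet ↑S ∧ n = S.card}


/-! Clark–Suen double counting. Fix a minimum dominating set `S` of `G`, a minimum dominating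
set `D` of `G □ H`, and assign to every vertex `g` of `G` a dominator `d g ∈ S`, so that the
cells `d⁻¹(u) × {h}` tile `V × W`. Call a cell row-dominated if `D` dominates it inside its copy
of `G`. For fixed `u ∈ S`, the `H`-coordinates of `D ∩ (d⁻¹(u) × W)` together with the rows `h`
whose cell is row-dominated dominate `H`; summing over `u` gives
`γ(G) γ(H) ≤ |D| + #(row-dominated cells)`. For fixed `h`, the `G`-coordinates of `D ∩ (V × {h})`
together with the `u ∈ S` whose cell is not row-dominated dominate `G`; summing over `h` gives
`#(row-dominated cells) ≤ |D|`. -/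

namespace SimpleGraph

variable {V W : Type*}

theorem isDomSet_univ (G : SimpleGraph V) : G.IsDomSet Set.univ :=
  fun _ hv => absurd (Set.mem_univ _) hv

theorem IsDomSet.exists_mem_eq_or_adj {G : SimpleGraph V} {S : Set V} (hS : G.IsDomSet S)
    (g : V) : ∃ u ∈ S, g = u ∨ G.Adj g u := by
  by_cases hg : g ∈ S
  · exact ⟨g, hg, Or.inl rfl⟩
  · obtain ⟨u, hu, hadj⟩ := hS g hg
    exact ⟨u, hu, Or.inr hadj⟩

section Fintype

variable [Fintype V] (G : SimpleGraph V)

theorem domNum_le_card {S : Finset V} (hS : G.IsDomSet ↑S) : G.domNum ≤ #S :=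
  Nat.sInf_le ⟨S, hS, rfl⟩

theorem exists_isDomSet_card_eq_domNum : ∃ S : Finset V, G.IsDomSet ↑S ∧ #S = G.domNum := by
  classical
  obtain ⟨S, hS, hcard⟩ := Nat.sInf_mem (s := {n | ∃ S : Finset V, G.IsDomSet ↑S ∧ n = #S})
    ⟨_, univ, by simpa using G.isDomSet_univ, rfl⟩
  exact ⟨S, hS, hcard.symm⟩

end Fintype

/-- The cell `d⁻¹(u) × {h}` is dominated by `D` inside the copy `V × {h}` of `G`. -/
def IsRowDominated (G : SimpleGraph V) (D : Finset (V × W)) (d : V → V) (u : V) (h : W) :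
    Prop :=
  ∀ g, d g = u → ∃ g', (g', h) ∈ D ∧ (g' = g ∨ G.Adj g g')

open scoped Classical

variable {G : SimpleGraph V} {H : SimpleGraph W} {D : Finset (V × W)} {d : V → V}

/-- Each vertex `g` is dominated either inside the row-dominated cell of `d g`, or by `d g`. -/
theorem isDomSet_image_fst_union_not_rowDominated {S : Finset V} (hdS : ∀ g, d g ∈ S)
    (hdg : ∀ g, g = d g ∨ G.Adj g (d g)) (h : W) :
    G.IsDomSet ↑({p ∈ D | p.2 = h}.image Prod.fst ∪ {u ∈ S | ¬G.IsRowDominated D d u h}) := by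
  intro g hg
  simp only [coe_union, coe_image, coe_filter, Set.mem_union, Set.mem_image] at hg ⊢
  by_cases hrow : G.IsRowDominated D d (d g) h
  · obtain ⟨g', hg'D, rfl | hadj⟩ := hrow g rfl
    · exact absurd (Or.inl ⟨(g', h), ⟨hg'D, rfl⟩, rfl⟩) hg
    · exact ⟨g', Or.inl ⟨(g', h), ⟨hg'D, rfl⟩, rfl⟩, hadj⟩
  · have hdg_mem : d g ∈ S ∧ ¬G.IsRowDominated D d (d g) h := ⟨hdS g, hrow⟩
    rcases hdg g with hgd | hadj
    · exact absurd (Or.inr (hgd ▸ hdg_mem)) hg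
    · exact ⟨d g, Or.inr hdg_mem, hadj⟩

theorem domNum_add_card_rowDominated_le [Fintype V] {S : Finset V} (hdS : ∀ g, d g ∈ S)
    (hdg : ∀ g, g = d g ∨ G.Adj g (d g)) (h : W) :
    G.domNum + #{u ∈ S | G.IsRowDominated D d u h} ≤ #{p ∈ D | p.2 = h} + #S := by
  have hsplit := S.card_filter_add_card_filter_not (G.IsRowDominated D d · h)
  have hdom : G.domNum ≤ #{p ∈ D | p.2 = h} + #{u ∈ S | ¬G.IsRowDominated D d u h} :=
    (G.domNum_le_card (isDomSet_image_fst_union_not_rowDominated hdS hdg h)).trans <|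
      (card_union_le _ _).trans (add_le_add card_image_le le_rfl)
  omega

variable [Fintype W]

/-- If `h` is not in the union, some `(g, h)` with `d g = u` is not row-dominated; its dominator
in `D` is then not a `G`-neighbour, hence an `H`-neighbour `(g, h')`, and `h'` is in the union. -/
theorem isDomSet_image_snd_union_rowDominated (hD : (G □ H).IsDomSet ↑D) (u : V) :
    H.IsDomSet ↑({p ∈ D | d p.1 = u}.image Prod.snd ∪
      ({h | G.IsRowDominated D d u h} : Finset W)) := by
  intro h hh
  obtain ⟨g, hgu, hg⟩ : ∃ g, d g = u ∧ ∀ g', (g', h) ∈ D → g' ≠ g ∧ ¬G.Adj g g' := by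
    simpa [IsRowDominated, not_or] using
      fun (hrow : G.IsRowDominated D d u h) => hh (by simp [hrow])
  obtain ⟨p, hpD, hadj⟩ := hD (g, h) fun hgh => (hg g hgh).1 rfl
  rcases boxProd_adj.mp hadj with ⟨hG, rfl⟩ | ⟨hH, hp⟩
  · exact absurd hG (hg p.1 hpD).2
  · refine ⟨p.2, ?_, hH⟩
    simp only [coe_union, coe_image, coe_filter, Set.mem_union, Set.mem_image]
    exact Or.inl ⟨p, ⟨hpD, hp ▸ hgu⟩, rfl⟩

theorem domNum_le_card_cell_add_card_rowDominated (hD : (G □ H).IsDomSet ↑D) (u : V) :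
    H.domNum ≤ #{p ∈ D | d p.1 = u} + #{h | G.IsRowDominated D d u h} :=
  (H.domNum_le_card (isDomSet_image_snd_union_rowDominated hD u)).trans <|
    (card_union_le _ _).trans (add_le_add card_image_le le_rfl)

theorem card_mul_domNum_le_card_add_sum_card_rowDominated (hD : (G □ H).IsDomSet ↑D)
    {S : Finset V} (hdS : ∀ g, d g ∈ S) :
    #S * H.domNum ≤ #D + ∑ u ∈ S, #{h | G.IsRowDominated D d u h} :=
  calc #S * H.domNum = ∑ _u ∈ S, H.domNum := by rw [sum_const, smul_eq_mul]
    _ ≤ ∑ u ∈ S, (#{p ∈ D | d p.1 = u} + #{h | G.IsRowDominated D d u h}) :=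
      sum_le_sum fun u _ => domNum_le_card_cell_add_card_rowDominated hD u
    _ = #D + ∑ u ∈ S, #{h | G.IsRowDominated D d u h} := by
      rw [sum_add_distrib, ← card_eq_sum_card_fiberwise (f := fun p : V × W => d p.1)
        fun p _ => hdS p.1]

theorem sum_card_rowDominated_le_card [Fintype V] {S : Finset V} (hdS : ∀ g, d g ∈ S)
    (hdg : ∀ g, g = d g ∨ G.Adj g (d g)) (hS : #S ≤ G.domNum) :
    ∑ h, #{u ∈ S | G.IsRowDominated D d u h} ≤ #D :=
  calc ∑ h, #{u ∈ S | G.IsRowDominated D d u h} ≤ ∑ h, #{p ∈ D | p.2 = h} :=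
        sum_le_sum fun h _ => by have := domNum_add_card_rowDominated_le (D := D) hdS hdg h; omega
    _ = #D := (card_eq_sum_card_fiberwise fun p _ => mem_univ p.2).symm

end SimpleGraph

/-- Clark–Suen: `2γ(G □ H) ≥ γ(G)·γ(H)`. -/
theorem domNum_mul_domNum_le_two_mul_domNum_boxProd {V W : Type*} [Fintype V] [Fintype W]
    (G : SimpleGraph V) (H : SimpleGraph W) :
    G.domNum * H.domNum ≤ 2 * (G.boxProd H).domNum := by
  classical
  obtain ⟨S, hS, hSmin⟩ := G.exists_isDomSet_card_eq_domNum
  obtain ⟨D, hD, hDmin⟩ := (G.boxProd H).exists_isDomSet_card_eq_domNum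
  choose d hdS hdg using hS.exists_mem_eq_or_adj
  calc G.domNum * H.domNum = #S * H.domNum := by rw [hSmin]
    _ ≤ #D + ∑ u ∈ S, #{h | G.IsRowDominated D d u h} :=
      SimpleGraph.card_mul_domNum_le_card_add_sum_card_rowDominated hD hdS
    _ = #D + ∑ h, #{u ∈ S | G.IsRowDominated D d u h} :=
      congrArg _ (sum_card_bipartiteAbove_eq_sum_card_bipartiteBelow _)
    _ ≤ #D + #D :=
      add_le_add le_rfl (SimpleGraph.sum_card_rowDominated_le_card hdS hdg hSmin.le)
    _ = 2 * (G.boxProd H).domNum := by rw [hDmin, two_mul]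
end

section
/- Every tree T of order n ≥ 3 satisfies γ_{r2}(T) ≤ 3n/4. -/
open Finset

/-!
Root the tree at a leaf `r` and fix a parity `b`. Give every vertex whose depth has parity `b`
both colours if it is adjacent to a leaf, and otherwise the single colour `⌊depth / 2⌋ mod 2`;
give all other vertices `∅`. An unlabelled leaf hangs from a vertex carrying both colours, and an
unlabelled inner vertex sees its parent and one of its children, two levels apart and hence of
different colours. The two functions obtained for `b = 0, 1` have total weight `n + s`, where `s`
is the number of vertices adjacent to a leaf, and `2 s ≤ n` because distinct such vertices have
distinct leaf neighbours, which are not themselves adjacent to a leaf once `n ≥ 3`. So the lighter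
of the two has weight at most `3n/4`.
-/

namespace SimpleGraph

open Fin.NatCast

variable {V : Type*} {G : SimpleGraph V}

/-- Isolated vertices count as leaves; in a connected graph with two or more vertices this is
`G.degree v = 1`. -/
def IsLeaf (G : SimpleGraph V) (v : V) : Prop := (G.neighborSet v).Subsingleton

def IsSupportVertex (G : SimpleGraph V) (v : V) : Prop := ∃ u, G.Adj v u ∧ G.IsLeaf u

lemma Connected.eq_or_eq_of_adj_of_isLeaf (hG : G.Connected) {s u : V} (hsu : G.Adj s u)
    (hs : G.IsLeaf s) (hu : G.IsLeaf u) (w : V) : w = s ∨ w = u := by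
  have closed {a b : V} (q : G.Walk a b) : a = s ∨ a = u → b = s ∨ b = u := by
    induction q with
    | nil => exact id
    | cons h q ih =>
      rintro (rfl | rfl)
      · exact ih (.inr (hs h hsu))
      · exact ih (.inl (hu h hsu.symm))
  exact closed (hG s w).some (.inl rfl)

lemma Connected.not_isLeaf_of_isSupportVertex [Fintype V] (hG : G.Connected)
    (hV : 3 ≤ Fintype.card V) {s : V} (hs : G.IsSupportVertex s) : ¬ G.IsLeaf s := by
  classical
  intro hsl
  obtain ⟨u, hsu, hu⟩ := hs
  have hsub : (univ : Finset V) ⊆ {s, u} := fun w _ => by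
    simpa using hG.eq_or_eq_of_adj_of_isLeaf hsu hsl hu w
  have := (card_le_card hsub).trans card_le_two
  rw [card_univ] at this
  omega

lemma card_isSupportVertex_mul_two_le [Fintype V] [DecidablePred G.IsSupportVertex]
    (hG : G.Connected) (hV : 3 ≤ Fintype.card V) :
    2 * #{v | G.IsSupportVertex v} ≤ Fintype.card V := by
  classical
  set S : Finset V := {v | G.IsSupportVertex v}
  set L : Finset V := {v | G.IsLeaf v}
  have hdisj : Disjoint S L :=
    disjoint_filter.mpr fun _ _ hs => hG.not_isLeaf_of_isSupportVertex hV hs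
  have hSL : #S ≤ #L :=
    card_le_card_of_forall_subsingleton G.Adj
      (fun s hs => have ⟨u, hsu, hu⟩ := (mem_filter.mp hs).2; ⟨u, by simpa [L] using hu, hsu⟩)
      (fun l hl s₁ hs₁ s₂ hs₂ => (mem_filter.mp hl).2 hs₁.2.symm hs₂.2.symm)
  have := card_union_of_disjoint hdisj ▸ card_le_univ (S ∪ L)
  omega

lemma Connected.exists_adj_dist_add_one_eq (hG : G.Connected) (r : V) {v : V} (hv : v ≠ r) :
    ∃ u, G.Adj v u ∧ G.dist r u + 1 = G.dist r v := by
  obtain ⟨p, hp⟩ := hG.exists_walk_length_eq_dist v r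
  obtain ⟨u, hvu, q, rfl⟩ := Walk.exists_eq_cons_of_ne hv p
  have hle : G.dist r u ≤ q.length := dist_comm (G := G) ▸ dist_le q
  have htri : G.dist r v ≤ G.dist r u + G.dist u v := hG.dist_triangle
  rw [dist_eq_one_iff_adj.mpr hvu.symm] at htri
  rw [Walk.length_cons, dist_comm] at hp
  exact ⟨u, hvu, by omega⟩

lemma IsTree.eq_of_adj_of_dist_add_one_eq (hG : G.IsTree) {r v u₁ u₂ : V}
    (h₁ : G.Adj u₁ v) (h₂ : G.Adj u₂ v)
    (hd₁ : G.dist r u₁ + 1 = G.dist r v) (hd₂ : G.dist r u₂ + 1 = G.dist r v) : u₁ = u₂ := by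
  obtain ⟨p₁, hp₁⟩ := hG.connected.exists_walk_length_eq_dist r u₁
  obtain ⟨p₂, hp₂⟩ := hG.connected.exists_walk_length_eq_dist r u₂
  have hq₁ := (p₁.concat h₁).isPath_of_length_eq_dist (by rw [Walk.length_concat, hp₁, hd₁])
  have hq₂ := (p₂.concat h₂).isPath_of_length_eq_dist (by rw [Walk.length_concat, hp₂, hd₂])
  exact (Walk.concat_inj ((hG.existsUnique_path r v).unique hq₁ hq₂)).1

lemma IsTree.exists_adj_dist_eq_add_one_of_not_isLeaf (hG : G.IsTree) (r : V) {v : V}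
    (hv : ¬ G.IsLeaf v) : ∃ w, G.Adj v w ∧ G.dist r w = G.dist r v + 1 := by
  obtain ⟨a, ha, a', ha', hne⟩ := Set.not_subsingleton_iff.mp hv
  rcases hG.dist_eq_dist_add_one_of_adj r ha with h | h
  · rcases hG.dist_eq_dist_add_one_of_adj r ha' with h' | h'
    · exact absurd (hG.eq_of_adj_of_dist_add_one_eq ha.symm ha'.symm h.symm h'.symm) hne
    · exact ⟨a', ha', h'⟩
  · exact ⟨a, ha, h⟩

lemma IsRainbowDF.rainbowNum_le [Fintype V] {k : ℕ} {f : V → Finset (Fin k)}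
    (hf : G.IsRainbowDF f) : G.rainbowNum k ≤ ∑ v, #(f v) :=
  Nat.sInf_le ⟨f, hf, rfl⟩

variable [DecidablePred G.IsSupportVertex]

noncomputable def parityRainbowFn (G : SimpleGraph V) [DecidablePred G.IsSupportVertex]
    (r : V) (b : Fin 2) (v : V) : Finset (Fin 2) :=
  if G.dist r v % 2 = b then
    if G.IsSupportVertex v then univ else {((G.dist r v / 2 : ℕ) : Fin 2)}
  else ∅

lemma sum_card_parityRainbowFn (r v : V) :
    ∑ b, #(G.parityRainbowFn r b v) = if G.IsSupportVertex v then 2 else 1 := by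
  rw [Fin.sum_univ_two]
  unfold parityRainbowFn
  rcases Nat.mod_two_eq_zero_or_one (G.dist r v) with h | h <;> split_ifs <;> simp_all

lemma sum_sum_card_parityRainbowFn [Fintype V] (r : V) :
    ∑ b, ∑ v, #(G.parityRainbowFn r b v) = Fintype.card V + #{v | G.IsSupportVertex v} := by
  have hsplit := card_filter_add_card_filter_not (s := univ) (G.IsSupportVertex ·)
  rw [sum_comm]
  simp only [sum_card_parityRainbowFn, sum_ite, sum_const, smul_eq_mul, card_univ] at hsplit ⊢
  omega

lemma IsTree.isRainbowDF_parityRainbowFn [Nontrivial V] (hG : G.IsTree) {r : V}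
    (hr : G.IsLeaf r) (b : Fin 2) : G.IsRainbowDF (G.parityRainbowFn r b) := by
  intro v hv c
  have hvb : G.dist r v % 2 ≠ b := fun h => by
    rw [parityRainbowFn, if_pos h] at hv
    split_ifs at hv
    · exact univ_nonempty.ne_empty hv
    · exact singleton_ne_empty _ hv
  have hcolour (x : V) (hx : G.dist r x % 2 = b) :
      ((G.dist r x / 2 : ℕ) : Fin 2) ∈ G.parityRainbowFn r b x := by
    unfold parityRainbowFn
    split_ifs <;> simp
  have hboth (x : V) (hx : G.dist r x % 2 = b) (hsx : G.IsSupportVertex x) :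
      c ∈ G.parityRainbowFn r b x := by
    simp [parityRainbowFn, hx, hsx]
  by_cases hleaf : G.IsLeaf v
  · obtain ⟨u, hvu⟩ := hG.connected.preconnected.exists_adj_of_nontrivial v
    refine ⟨u, hvu, hboth u ?_ ⟨v, hvu.symm, hleaf⟩⟩
    rcases hG.dist_eq_dist_add_one_of_adj r hvu with h | h <;> omega
  · have hvr : v ≠ r := by
      rintro rfl
      exact hleaf hr
    obtain ⟨p, hvp, hp⟩ := hG.connected.exists_adj_dist_add_one_eq r hvr
    obtain ⟨w, hvw, hw⟩ := hG.exists_adj_dist_eq_add_one_of_not_isLeaf r hleaf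
    have hpw : ((G.dist r w / 2 : ℕ) : Fin 2) = ((G.dist r p / 2 : ℕ) : Fin 2) + 1 := by
      rw [show G.dist r w / 2 = G.dist r p / 2 + 1 by omega, Nat.cast_succ]
    rcases (by decide : ∀ a c : Fin 2, c = a ∨ c = a + 1) ((G.dist r p / 2 : ℕ) : Fin 2) c
      with rfl | rfl
    · exact ⟨p, hvp, hcolour p (by omega)⟩
    · exact ⟨w, hvw, hpw ▸ hcolour w (by omega)⟩

end SimpleGraph

open SimpleGraph in
/-- Every tree of order `n ≥ 3` satisfies `γ_{r2}(T) ≤ 3n/4`. -/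
theorem rainbow2_le_three_quarters_of_isTree {V : Type*} [Fintype V]
    (T : SimpleGraph V) (hT : T.IsTree) (hn : 3 ≤ Fintype.card V) :
    4 * T.rainbowNum 2 ≤ 3 * Fintype.card V := by
  classical
  have : Nontrivial V := Fintype.one_lt_card_iff_nontrivial.mp (by omega)
  obtain ⟨r, hr⟩ := hT.exists_vert_degree_one_of_nontrivial
  have hr : T.IsLeaf r := fun _ ha _ ha' =>
    (degree_eq_one_iff_existsUnique_adj.mp hr).unique ha ha'
  have hle (b : Fin 2) : T.rainbowNum 2 ≤ ∑ v, #(T.parityRainbowFn r b v) :=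
    (hT.isRainbowDF_parityRainbowFn hr b).rainbowNum_le
  have htwice : 2 * T.rainbowNum 2 ≤ Fintype.card V + #{v | T.IsSupportVertex v} := by
    rw [← sum_sum_card_parityRainbowFn r, Fin.sum_univ_two, two_mul]
    exact add_le_add (hle 0) (hle 1)
  have := card_isSupportVertex_mul_two_le hT.connected hn
  omega
end

section
/- For any connected graph G, γ_{r2}(G) ≥ ⌈(2·diam(G) + 2)/5⌉. -/
open Finset

/-!
Take a minimum 2-rainbow dominating function `f` of weight `w` and a diametral geodesic
`v₀, …, v_d`. The `v_i` with `f v_i ≠ ∅` are distinct and each carries weight at least 1, so there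
are at most `w` of them. Each `v_i` with `f v_i = ∅` sees weight at least 2 on its neighbours,
while a vertex is adjacent to at most three vertices of a geodesic, so double counting gives
`2 · #{i | f v_i = ∅} ≤ 3w`. Altogether `2(d + 1) ≤ 5w`.
-/

lemma Finset.card_le_of_forall_sub_le {s : Finset ℕ} {k : ℕ}
    (h : ∀ i ∈ s, ∀ j ∈ s, i ≤ j → j - i ≤ k) : #s ≤ k + 1 := by
  rcases s.eq_empty_or_nonempty with rfl | hs
  · simp
  have hsub : s ⊆ Icc (s.min' hs) (s.min' hs + k) := fun j hj ↦ by
    have hmin := s.min'_le j hj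
    have := h _ (s.min'_mem hs) j hj hmin
    simp only [mem_Icc]
    omega
  exact (card_le_card hsub).trans (by simp; omega)

namespace SimpleGraph

variable {V : Type*} {G : SimpleGraph V}

namespace Walk

variable {u v : V} {p : G.Walk u v}

lemma dist_getVert_getVert_of_length_eq_dist (hp : p.length = G.dist u v) {i j : ℕ}
    (hij : i ≤ j) (hj : j ≤ p.length) : G.dist (p.getVert i) (p.getVert j) = j - i := by
  have h := length_eq_dist_of_subwalk hp
    ((p.take j).isSubwalk_drop i |>.trans (p.isSubwalk_take j))
  rw [drop_length, take_length, min_eq_left hj, take_getVert, min_eq_right hij] at h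
  exact h.symm

lemma sub_le_two_of_adj_getVert_of_adj_getVert (hp : p.length = G.dist u v) {i j : ℕ}
    (hij : i ≤ j) (hj : j ≤ p.length) {x : V} (hix : G.Adj (p.getVert i) x)
    (hjx : G.Adj (p.getVert j) x) : j - i ≤ 2 := by
  rw [← dist_getVert_getVert_of_length_eq_dist hp hij hj]
  simpa using dist_le (cons hix (cons hjx.symm nil))

lemma card_filter_adj_getVert_le_three [DecidableRel G.Adj] (hp : p.length = G.dist u v)
    (x : V) : #{i ∈ range (p.length + 1) | G.Adj (p.getVert i) x} ≤ 3 := by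
  refine card_le_of_forall_sub_le fun i hi j hj hij ↦ ?_
  simp only [mem_filter, mem_range] at hi hj
  exact sub_le_two_of_adj_getVert_of_adj_getVert hp hij (by omega) hi.2 hj.2

end Walk

variable [Fintype V]

lemma exists_isRainbowDF_rainbowNum_eq (G : SimpleGraph V) (k : ℕ) :
    ∃ f : V → Finset (Fin k), G.IsRainbowDF f ∧ G.rainbowNum k = ∑ v, #(f v) := by
  have hall : G.IsRainbowDF fun _ ↦ (univ : Finset (Fin k)) :=
    fun v hv c ↦ absurd (hv ▸ mem_univ c) (notMem_empty c)
  exact Nat.sInf_mem (s := {w | ∃ f : V → Finset (Fin k), G.IsRainbowDF f ∧ w = ∑ v, #(f v)})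
    ⟨_, _, hall, rfl⟩

variable {ι : Type*} {g : ι → V} {s : Finset ι}

lemma card_filter_ne_empty_le_sum_card {α : Type*} [DecidableEq α] (f : V → Finset α)
    (hg : Set.InjOn g s) : #{i ∈ s | f (g i) ≠ ∅} ≤ ∑ v, #(f v) := by
  classical
  calc #{i ∈ s | f (g i) ≠ ∅}
      ≤ ∑ i ∈ s with f (g i) ≠ ∅, #(f (g i)) := by
        simpa using card_nsmul_le_sum {i ∈ s | f (g i) ≠ ∅} (fun i ↦ #(f (g i))) 1 (fun i hi ↦
          card_pos.2 (nonempty_iff_ne_empty.2 (mem_filter.1 hi).2))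
    _ = ∑ v ∈ image g {i ∈ s | f (g i) ≠ ∅}, #(f v) :=
        (sum_image (f := fun v ↦ #(f v)) fun i hi j hj ↦
          hg (mem_filter.1 hi).1 (mem_filter.1 hj).1).symm
    _ ≤ ∑ v, #(f v) := sum_le_univ_sum_of_nonneg (fun _ ↦ Nat.zero_le _)

variable [DecidableRel G.Adj] {k m : ℕ} {f : V → Finset (Fin k)}

lemma IsRainbowDF.le_sum_card_of_eq_empty (hf : G.IsRainbowDF f) {v : V} (hv : f v = ∅) :
    k ≤ ∑ x with G.Adj v x, #(f x) :=
  calc k = #(univ : Finset (Fin k)) := (card_fin k).symm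
    _ ≤ #(({x | G.Adj v x} : Finset V).biUnion f) := card_le_card fun c _ ↦ by
        obtain ⟨x, hvx, hcx⟩ := hf v hv c
        exact mem_biUnion.2 ⟨x, mem_filter.2 ⟨mem_univ x, hvx⟩, hcx⟩
    _ ≤ ∑ x with G.Adj v x, #(f x) := card_biUnion_le

lemma IsRainbowDF.mul_card_filter_eq_empty_le (hf : G.IsRainbowDF f)
    (hadj : ∀ x, #{i ∈ s | G.Adj (g i) x} ≤ m) :
    k * #{i ∈ s | f (g i) = ∅} ≤ m * ∑ v, #(f v) :=
  calc k * #{i ∈ s | f (g i) = ∅}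
      = ∑ i ∈ s with f (g i) = ∅, k := by rw [sum_const, smul_eq_mul, mul_comm]
    _ ≤ ∑ i ∈ s with f (g i) = ∅, ∑ x with G.Adj (g i) x, #(f x) :=
        sum_le_sum fun i hi ↦ hf.le_sum_card_of_eq_empty (mem_filter.1 hi).2
    _ ≤ ∑ i ∈ s, ∑ x with G.Adj (g i) x, #(f x) :=
        sum_le_sum_of_subset (filter_subset _ _)
    _ = ∑ x, #{i ∈ s | G.Adj (g i) x} * #(f x) := by
        simp only [sum_filter]
        rw [sum_comm]
        refine sum_congr rfl fun x _ ↦ ?_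
        rw [← sum_filter, sum_const, smul_eq_mul]
    _ ≤ ∑ x, m * #(f x) := sum_le_sum fun x _ ↦ Nat.mul_le_mul_right _ (hadj x)
    _ = m * ∑ v, #(f v) := (mul_sum ..).symm

theorem IsRainbowDF.mul_card_le (hf : G.IsRainbowDF f) (hg : Set.InjOn g s)
    (hadj : ∀ x, #{i ∈ s | G.Adj (g i) x} ≤ m) : k * #s ≤ (m + k) * ∑ v, #(f v) :=
  calc k * #s = k * #{i ∈ s | f (g i) = ∅} + k * #{i ∈ s | f (g i) ≠ ∅} := by
        rw [← mul_add, card_filter_add_card_filter_not]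
    _ ≤ m * ∑ v, #(f v) + k * ∑ v, #(f v) :=
        add_le_add (hf.mul_card_filter_eq_empty_le hadj)
          (Nat.mul_le_mul_left k (card_filter_ne_empty_le_sum_card f hg))
    _ = (m + k) * ∑ v, #(f v) := (add_mul ..).symm

end SimpleGraph

/-- For any connected graph `G`, `γ_{r2}(G) ≥ ⌈(2·diam(G) + 2)/5⌉`. -/
theorem rainbow2_ge_diam_bound {V : Type*} [Fintype V] (G : SimpleGraph V)
    (hG : G.Connected) :
    ⌈(2 * (G.diam : ℚ) + 2) / 5⌉ ≤ (G.rainbowNum 2 : ℤ) := by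
  classical
  have : Nonempty V := hG.nonempty
  obtain ⟨f, hf, hw⟩ := G.exists_isRainbowDF_rainbowNum_eq 2
  obtain ⟨u, v, huv⟩ := G.exists_dist_eq_diam
  obtain ⟨p, hp⟩ := hG.exists_walk_length_eq_dist u v
  have hinj : Set.InjOn p.getVert (range (p.length + 1)) := fun i hi j hj ↦
    (p.isPath_of_length_eq_dist hp).getVert_injOn (by simpa [Nat.lt_succ_iff] using hi)
      (by simpa [Nat.lt_succ_iff] using hj)
  have hcount := hf.mul_card_le hinj (SimpleGraph.Walk.card_filter_adj_getVert_le_three hp)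
  rw [card_range, hp, huv, ← hw] at hcount
  have hcount' : (2 * (G.diam + 1) : ℚ) ≤ (3 + 2) * G.rainbowNum 2 := by exact_mod_cast hcount
  rw [Int.ceil_le, div_le_iff₀ (by norm_num)]
  push_cast
  linarith
end
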